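/- For a closed subset A of a compact metrizable space X with A = f⁻¹(0) for some continuous f : X → ℝ, one has S_I(A) = ⋂_{n≥1} S_I(f⁻¹((-1/n, 1/n))); hence S_I(A) is a Gδ-set in I(X). -/

import Mathlib

open scoped BigOperators

/-- An idempotent probability measure: normality on constants, max-plus homogeneity
(addition of constants), and max-additivity (pointwise max ↦ max). -/
def IsIdemProb {X : Type*} [TopologicalSpace X] (μ : C(X, ℝ) → ℝ) : Prop :=
  (∀ c : ℝ, μ (ContinuousMap.const X c) = c) ∧
  (∀ (c : ℝ) (φ : C(X, ℝ)), μ (ContinuousMap.const X c + φ) = c + μ φ) ∧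
  (∀ φ ψ : C(X, ℝ), μ (φ ⊔ ψ) = max (μ φ) (μ ψ))

/-- The support of a functional μ : the intersection of all closed sets F such that
μ φ depends only on φ|_F. -/
def suppI {X : Type*} [TopologicalSpace X] (μ : C(X, ℝ) → ℝ) : Set X :=
  ⋂₀ {F : Set X | IsClosed F ∧ ∀ φ ψ : C(X, ℝ), (∀ x ∈ F, φ x = ψ x) → μ φ = μ ψ}

/-- The space I(X) of idempotent probability measures with the topology of
pointwise convergence. -/
abbrev IPM (X : Type*) [TopologicalSpace X] : Type _ :=
  {μ : C(X, ℝ) → ℝ // IsIdemProb μ}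

/-- S_I(A) = {μ ∈ I(X) : supp μ ∩ A ≠ ∅}. -/
def SI {X : Type*} [TopologicalSpace X] (A : Set X) : Set (IPM X) :=
  {μ | (suppI μ.1 ∩ A).Nonempty}

/-!
A closed set `F` *determines* `μ` if `μ φ` depends only on `φ|_F`. Using Urysohn functions,
closed determining sets of an idempotent probability measure are closed under finite
intersections, so by compactness every open neighbourhood of `supp μ` contains one of them;
hence `supp μ` is itself determining and `μ ∈ S_I(U) ↔ ¬ (Uᶜ determines μ)`, a condition that
is open for the pointwise topology. Finally, since `supp μ` is compact, it meets `f⁻¹(0)` as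
soon as it meets every `f⁻¹(-1/n, 1/n)`, because `|f|` attains its minimum on it.
-/

open Set

section Determining

variable {X : Type*} [TopologicalSpace X] {μ : C(X, ℝ) → ℝ}

def IsDetermining (μ : C(X, ℝ) → ℝ) (F : Set X) : Prop :=
  ∀ φ ψ : C(X, ℝ), (∀ x ∈ F, φ x = ψ x) → μ φ = μ ψ

theorem IsDetermining.mono {F G : Set X} (hF : IsDetermining μ F) (hFG : F ⊆ G) :
    IsDetermining μ G :=
  fun φ ψ h => hF φ ψ fun x hx => h x (hFG hx)

theorem isDetermining_of_forall_pos_le_add {F : Set X}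
    (h : ∀ φ ψ : C(X, ℝ), (∀ x ∈ F, φ x = ψ x) → ∀ ε > 0, μ φ ≤ μ ψ + ε) :
    IsDetermining μ F := fun φ ψ hφψ =>
  le_antisymm (le_of_forall_pos_le_add (h φ ψ hφψ))
    (le_of_forall_pos_le_add (h ψ φ fun x hx => (hφψ x hx).symm))

theorem isClosed_suppI : IsClosed (suppI μ) :=
  isClosed_sInter fun _ hF => hF.1

theorem suppI_subset_of_isDetermining {F : Set X} (hFc : IsClosed F) (hF : IsDetermining μ F) :
    suppI μ ⊆ F :=
  sInter_subset_of_mem ⟨hFc, hF⟩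

theorem isClosed_setOf_isDetermining (F : Set X) :
    IsClosed {ν : IPM X | IsDetermining ν.1 F} := by
  simp only [IsDetermining, ofPred_forall]
  exact isClosed_iInter fun φ => isClosed_iInter fun ψ => isClosed_iInter fun _ =>
    isClosed_eq ((continuous_apply φ).comp continuous_subtype_val)
      ((continuous_apply ψ).comp continuous_subtype_val)

theorem SI_mono {A B : Set X} (hAB : A ⊆ B) : SI A ⊆ SI B :=
  fun _ ⟨x, hxs, hxA⟩ => ⟨x, hxs, hAB hxA⟩

end Determining

namespace IsIdemProb

variable {X : Type*} [TopologicalSpace X] {μ : C(X, ℝ) → ℝ}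

theorem monotone (hμ : IsIdemProb μ) : Monotone μ := fun φ ψ h => by
  have hmax := hμ.2.2 φ ψ
  rw [sup_eq_right.mpr h] at hmax
  exact hmax ▸ le_max_left _ _

theorem le_add_of_isDetermining (hμ : IsIdemProb μ) {F : Set X} (hF : IsDetermining μ F)
    {φ ψ : C(X, ℝ)} {ε : ℝ} (h : ∀ x ∈ F, φ x ≤ ψ x + ε) : μ φ ≤ μ ψ + ε := by
  have hagree : ∀ x ∈ F, (φ ⊔ (ContinuousMap.const X ε + ψ)) x =
      (ContinuousMap.const X ε + ψ) x := fun x hx => by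
    simp only [ContinuousMap.sup_apply, ContinuousMap.add_apply, ContinuousMap.const_apply]
    exact max_eq_right (by linarith [h x hx])
  calc μ φ ≤ μ (φ ⊔ (ContinuousMap.const X ε + ψ)) := hμ.monotone le_sup_left
    _ = ε + μ ψ := by rw [hF _ _ hagree, hμ.2.1]
    _ = μ ψ + ε := add_comm _ _

theorem isDetermining_inter [NormalSpace X] (hμ : IsIdemProb μ) {F G : Set X}
    (hFc : IsClosed F) (hGc : IsClosed G) (hF : IsDetermining μ F) (hG : IsDetermining μ G) :
    IsDetermining μ (F ∩ G) := by
  refine isDetermining_of_forall_pos_le_add fun φ ψ hφψ ε hε => ?_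
  set K := F ∩ {x | ψ x + ε ≤ φ x}
  have hKc : IsClosed K := hFc.inter (isClosed_le (by fun_prop) (by fun_prop))
  have hKG : Disjoint K G := disjoint_left.mpr fun x ⟨hxF, hxK⟩ hxG => by
    simp only [mem_ofPred_eq, hφψ x ⟨hxF, hxG⟩] at hxK
    linarith
  obtain ⟨u, hu0, hu1, hu01⟩ := exists_continuous_zero_one_of_isClosed hGc hKc hKG.symm
  -- `φ'` agrees with `φ` on `G` and is cut down to at most `ψ + ε` on `F`.
  set excess : C(X, ℝ) := (φ - ψ - ContinuousMap.const X ε) ⊔ 0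
  set φ' : C(X, ℝ) := φ - u * excess
  have hG' : ∀ x ∈ G, φ x = φ' x := fun x hx => by simp [φ', hu0 hx]
  have hF' : ∀ x ∈ F, φ' x ≤ ψ x + ε := fun x hx => by
    by_cases hxK : ψ x + ε ≤ φ x
    · have hexcess : excess x = φ x - ψ x - ε := by simp [excess]; linarith
      simp [φ', hexcess, hu1 ⟨hx, hxK⟩]
    · have hexcess : excess x = 0 := by simp [excess]; linarith
      simp [φ', hexcess]; linarith
  rw [hG _ _ hG']
  exact hμ.le_add_of_isDetermining hF hF'

theorem isDetermining_suppI [NormalSpace X] [CompactSpace X] (hμ : IsIdemProb μ) :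
    IsDetermining μ (suppI μ) := by
  refine isDetermining_of_forall_pos_le_add fun φ ψ hφψ ε hε => ?_
  let D : Set (Set X) := {F | IsClosed F ∧ IsDetermining μ F}
  have hdir : Directed (· ⊇ ·) (fun F : D => (F : Set X)) := fun F G =>
    ⟨⟨F.1 ∩ G.1, F.2.1.inter G.2.1, hμ.isDetermining_inter F.2.1 G.2.1 F.2.2 G.2.2⟩,
      inter_subset_left, inter_subset_right⟩
  have hD : Nonempty D := ⟨⟨univ, isClosed_univ, fun φ ψ h => congrArg μ (ContinuousMap.ext
    fun x => h x trivial)⟩⟩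
  have hV : ∀ x ∈ ⋂ F : D, (F : Set X), {x | φ x < ψ x + ε} ∈ nhds x := fun x hx =>
    (isOpen_lt (by fun_prop) (by fun_prop)).mem_nhds (by
      rw [← sInter_eq_iInter] at hx
      simp only [mem_ofPred_eq, hφψ x hx]
      linarith)
  obtain ⟨F, hFV⟩ := exists_subset_nhds_of_isCompact' hdir (fun F => F.2.1.isCompact)
    (fun F => F.2.1) hV
  exact hμ.le_add_of_isDetermining F.2.2 fun x hx => (hFV hx).le

theorem suppI_subset_iff [NormalSpace X] [CompactSpace X] (hμ : IsIdemProb μ) {F : Set X}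
    (hFc : IsClosed F) : suppI μ ⊆ F ↔ IsDetermining μ F :=
  ⟨hμ.isDetermining_suppI.mono, suppI_subset_of_isDetermining hFc⟩

end IsIdemProb

theorem isOpen_SI {X : Type*} [TopologicalSpace X] [NormalSpace X] [CompactSpace X] {U : Set X}
    (hU : IsOpen U) : IsOpen (SI U) := by
  have hSI : SI U = {ν : IPM X | IsDetermining ν.1 Uᶜ}ᶜ := by
    ext ν
    rw [mem_compl_iff, mem_ofPred_eq, ← ν.2.suppI_subset_iff hU.isClosed_compl,
      subset_compl_iff_disjoint_right, not_disjoint_iff_nonempty_inter]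
    rfl
  rw [hSI]
  exact (isClosed_setOf_isDetermining _).isOpen_compl

theorem IsCompact.inter_preimage_zero_nonempty {X : Type*} [TopologicalSpace X] {K : Set X}
    (hK : IsCompact K) {f : X → ℝ} (hf : ContinuousOn f K)
    (h : ∀ n : ℕ, (K ∩ f ⁻¹' Ioo (-(1 / (n + 1) : ℝ)) (1 / (n + 1))).Nonempty) :
    (K ∩ f ⁻¹' {0}).Nonempty := by
  obtain ⟨x, hxK, -⟩ := h 0
  obtain ⟨x₀, hx₀K, hmin⟩ := hK.exists_isMinOn ⟨x, hxK⟩ (continuous_abs.comp_continuousOn hf)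
  refine ⟨x₀, hx₀K, ?_⟩
  by_contra hne
  obtain ⟨n, hn⟩ := exists_nat_one_div_lt (abs_pos.mpr hne)
  obtain ⟨y, hyK, hy⟩ := h n
  have hsmall : |f y| < 1 / (n + 1) := abs_lt.mpr hy
  have hle : |f x₀| ≤ |f y| := hmin hyK
  linarith

theorem SI_closed_Gdelta_general {X : Type*} [MetricSpace X] [CompactSpace X]
    (A : Set X) (f : X → ℝ) (hf : Continuous f) (hAf : A = f ⁻¹' {0}) :
    SI A = (⋂ n : ℕ, SI (f ⁻¹' Set.Ioo (-(1 / (n + 1) : ℝ)) (1 / (n + 1)))) ∧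
    IsGδ (SI A) := by
  have heq : SI A = ⋂ n : ℕ, SI (f ⁻¹' Set.Ioo (-(1 / (n + 1) : ℝ)) (1 / (n + 1))) := by
    subst hAf
    ext μ
    simp only [mem_iInter]
    refine ⟨fun h n => SI_mono (preimage_mono ?_) h,
      isClosed_suppI.isCompact.inter_preimage_zero_nonempty hf.continuousOn⟩
    rw [singleton_subset_iff, mem_Ioo]
    constructor <;> linarith [show (0 : ℝ) < 1 / (n + 1) by positivity]
  refine ⟨heq, heq ▸ IsGδ.iInter fun n => (isOpen_SI (isOpen_Ioo.preimage hf)).isGδ⟩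

theorem SI_closed_Gdelta {X : Type*} [MetricSpace X] [CompactSpace X]
    (A : Set X) (hA : IsClosed A) (f : X → ℝ) (hf : Continuous f) (hAf : A = f ⁻¹' {0}) :
    SI A = (⋂ n : ℕ, SI (f ⁻¹' Set.Ioo (-(1 / (n + 1) : ℝ)) (1 / (n + 1)))) ∧
    IsGδ (SI A) :=
  SI_closed_Gdelta_general A f hf hAf
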